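/- The functions κ(d,·)Ω are stationary solutions (verification of the Lorentz-transformed solitons). For every d ∈ (−1,1) and every y ∈ (−1,1), the function y ↦ κ(d,y) satisfies ρ(y)^{−1} ( ρ(y)(1−y²) ∂_y κ(d,y) )' − 2(p+1)/(p−1)² · κ(d,y) + κ(d,y)^p = 0. Consequently, for any unit vector Ω ∈ ℝ^m, w = κ(d,·)Ω satisfies ρ^{−1}(ρ(1−y²) w')' − 2(p+1)/(p−1)² w + |w|^{p−1} w = 0 on (−1,1). -/

import Mathlib

/-!
With `a = 2/(p-1)` and `v = 1 + d y`, one has `ρ (1 - y²) = (1 - y²)^(a+1)`, and a direct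
computation gives `ρ⁻¹ (ρ (1 - y²) (v^(-a))')' = a (a+1) (1 - (1 - d²)/v²) v^(-a)`.
Since `κ₀^(p-1) = 2(p+1)/(p-1)² = a (a+1)` and `a (p-1) = 2`, the nonlinearity is
`κ^p = κ^(p-1) κ = a (a+1) (1 - d²)/v² · κ`, and the equation holds term by term.
For `w = κ Ω` with `‖Ω‖ = 1`, derivatives commute with `· • Ω` and `‖w‖^(p-1) = κ^(p-1)`
because `κ > 0`.
-/

open MeasureTheory Real Set

/-- `κ₀ = (2(p+1)/(p-1)²)^{1/(p-1)}` -/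
noncomputable def kappa0 (p : ℝ) : ℝ := (2 * (p + 1) / (p - 1) ^ 2) ^ (1 / (p - 1))

/-- `κ(d,y) = κ₀ (1-d²)^{1/(p-1)} (1+dy)^{-2/(p-1)}` -/
noncomputable def kappa (p d y : ℝ) : ℝ :=
  kappa0 p * (1 - d ^ 2) ^ (1 / (p - 1)) * (1 + d * y) ^ (-(2 / (p - 1)))

/-- the weight `ρ(y) = (1-y²)^{2/(p-1)}` -/
noncomputable def rho (p y : ℝ) : ℝ := (1 - y ^ 2) ^ (2 / (p - 1))

theorem deriv_smul_const_eq {𝕜 F : Type*} [RCLike 𝕜] [NormedAddCommGroup F] [NormedSpace 𝕜 F]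
    (c : 𝕜 → 𝕜) (v : F) (x : 𝕜) : deriv (fun y => c y • v) x = deriv c x • v := by
  by_cases hc : DifferentiableAt 𝕜 c x
  · exact deriv_smul_const hc v
  rcases eq_or_ne v 0 with rfl | hv
  · simp
  obtain ⟨g, -, hg⟩ := exists_dual_vector 𝕜 v (norm_ne_zero_iff.2 hv)
  have hcv : ¬DifferentiableAt 𝕜 (fun y => c y • v) x := fun h => hc <| by
    have hc_eq : c = fun y => g (c y • v) / ‖v‖ := by
      funext y
      simp [hg, hv]
    rw [hc_eq]
    exact (g.differentiableAt.comp x h).div_const _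
  rw [deriv_zero_of_not_differentiableAt hcv, deriv_zero_of_not_differentiableAt hc, zero_smul]

theorem deriv_mul_deriv_smul_const {E : Type*} [NormedAddCommGroup E] [NormedSpace ℝ E]
    (w u : ℝ → ℝ) (v : E) (y : ℝ) :
    deriv (fun z => w z • deriv (fun z' => u z' • v) z) y
      = deriv (fun z => w z * deriv u z) y • v := by
  simp only [deriv_smul_const_eq, smul_smul]

section LorentzProfile

variable {d y : ℝ}

theorem one_sub_sq_pos_of_mem_Ioo (hy : y ∈ Ioo (-1 : ℝ) 1) : 0 < 1 - y ^ 2 := by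
  obtain ⟨h₁, h₂⟩ := hy
  nlinarith

theorem one_add_mul_pos_of_mem_Ioo (hd : d ∈ Icc (-1 : ℝ) 1) (hy : y ∈ Ioo (-1 : ℝ) 1) :
    0 < 1 + d * y := by
  have hy' := abs_lt.2 hy
  have hd' := abs_le.2 hd
  have : |d * y| < 1 := by rw [abs_mul]; nlinarith [abs_nonneg d, abs_nonneg y]
  linarith [neg_abs_le (d * y)]

theorem hasDerivAt_one_add_mul_rpow (a : ℝ) (hy : 0 < 1 + d * y) :
    HasDerivAt (fun z => (1 + d * z) ^ a) (d * a * (1 + d * y) ^ (a - 1)) y := by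
  have hlin : HasDerivAt (fun z : ℝ => 1 + d * z) d y := by
    simpa using ((hasDerivAt_id y).const_mul d).const_add 1
  exact hlin.rpow_const (Or.inl hy.ne')

theorem hasDerivAt_one_sub_sq_rpow (a : ℝ) (hy : y ∈ Ioo (-1 : ℝ) 1) :
    HasDerivAt (fun z => (1 - z ^ 2) ^ a) (-(2 * y) * a * (1 - y ^ 2) ^ (a - 1)) y := by
  have hquad : HasDerivAt (fun z : ℝ => 1 - z ^ 2) (-(2 * y)) y := by
    simpa using (hasDerivAt_pow 2 y).const_sub 1
  exact hquad.rpow_const (Or.inl (one_sub_sq_pos_of_mem_Ioo hy).ne')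

theorem weighted_flux_one_add_mul_rpow {a : ℝ} (hd : d ∈ Icc (-1 : ℝ) 1) (hy : y ∈ Ioo (-1 : ℝ) 1) :
    (1 - y ^ 2) ^ a * (1 - y ^ 2) * deriv (fun z => (1 + d * z) ^ (-a)) y
      = -a * d * ((1 - y ^ 2) ^ (a + 1) * (1 + d * y) ^ (-a - 1)) := by
  rw [(hasDerivAt_one_add_mul_rpow (-a) (one_add_mul_pos_of_mem_Ioo hd hy)).deriv,
    rpow_add_one (one_sub_sq_pos_of_mem_Ioo hy).ne']
  ring

theorem weighted_laplacian_one_add_mul_rpow {a : ℝ}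
    (hd : d ∈ Icc (-1 : ℝ) 1) (hy : y ∈ Ioo (-1 : ℝ) 1) :
    ((1 - y ^ 2) ^ a)⁻¹ *
        deriv (fun z => (1 - z ^ 2) ^ a * (1 - z ^ 2) * deriv (fun z' => (1 + d * z') ^ (-a)) z) y
      = a * (a + 1) * (1 - (1 - d ^ 2) / (1 + d * y) ^ 2) * (1 + d * y) ^ (-a) := by
  have hu := one_sub_sq_pos_of_mem_Ioo hy
  have hv := one_add_mul_pos_of_mem_Ioo hd hy
  have hflux : (fun z => (1 - z ^ 2) ^ a * (1 - z ^ 2) * deriv (fun z' => (1 + d * z') ^ (-a)) z)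
      =ᶠ[nhds y] fun z => -a * d * ((1 - z ^ 2) ^ (a + 1) * (1 + d * z) ^ (-a - 1)) :=
    Filter.eventually_of_mem (isOpen_Ioo.mem_nhds hy) fun _ hz =>
      weighted_flux_one_add_mul_rpow hd hz
  rw [hflux.deriv_eq, (((hasDerivAt_one_sub_sq_rpow (a + 1) hy).fun_mul
    (hasDerivAt_one_add_mul_rpow (-a - 1) hv)).const_mul (-a * d)).deriv]
  simp only [show a + 1 - 1 = a by ring, rpow_add_one hu.ne', rpow_sub_one hv.ne']
  -- otherwise `field_simp` rewrites `1 + d * y` to `1 + y * d` and no longer sees `hv`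
  set v := 1 + d * y with hv_def
  field_simp [(rpow_pos_of_pos hu a).ne', hv.ne']
  rw [hv_def]
  ring

end LorentzProfile

section Kappa

variable {p d y : ℝ}

theorem two_mul_add_one_div_sq_eq (hp : p ≠ 1) :
    2 * (p + 1) / (p - 1) ^ 2 = 2 / (p - 1) * (2 / (p - 1) + 1) := by
  have : p - 1 ≠ 0 := sub_ne_zero.2 hp
  field_simp
  ring

theorem two_mul_add_one_div_sq_pos (hp : 1 < p) : 0 < 2 * (p + 1) / (p - 1) ^ 2 :=
  div_pos (by linarith) (pow_pos (by linarith) 2)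

theorem kappa0_pos (hp : 1 < p) : 0 < kappa0 p :=
  rpow_pos_of_pos (two_mul_add_one_div_sq_pos hp) _

theorem kappa0_rpow (hp : 1 < p) : kappa0 p ^ (p - 1) = 2 * (p + 1) / (p - 1) ^ 2 := by
  rw [kappa0, ← rpow_mul (two_mul_add_one_div_sq_pos hp).le, one_div_mul_cancel (by linarith),
    rpow_one]

theorem kappa_pos (hp : 1 < p) (hd : d ∈ Ioo (-1 : ℝ) 1) (hy : y ∈ Ioo (-1 : ℝ) 1) :
    0 < kappa p d y := by
  have hd₂ : 0 < 1 - d ^ 2 := one_sub_sq_pos_of_mem_Ioo hd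
  have hv := one_add_mul_pos_of_mem_Ioo (Ioo_subset_Icc_self hd) hy
  have hκ₀ := kappa0_pos hp
  unfold kappa
  positivity

theorem kappa_rpow_sub_one (hp : 1 < p) (hd : d ∈ Ioo (-1 : ℝ) 1) (hy : y ∈ Ioo (-1 : ℝ) 1) :
    kappa p d y ^ (p - 1) = 2 * (p + 1) / (p - 1) ^ 2 * (1 - d ^ 2) / (1 + d * y) ^ 2 := by
  have hp₁ : p - 1 ≠ 0 := by linarith
  have hd₂ : 0 < 1 - d ^ 2 := one_sub_sq_pos_of_mem_Ioo hd
  have hv := one_add_mul_pos_of_mem_Ioo (Ioo_subset_Icc_self hd) hy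
  rw [kappa, mul_rpow (mul_nonneg (kappa0_pos hp).le (rpow_nonneg hd₂.le _)) (rpow_nonneg hv.le _),
    mul_rpow (kappa0_pos hp).le (rpow_nonneg hd₂.le _), kappa0_rpow hp, ← rpow_mul hd₂.le,
    ← rpow_mul hv.le, one_div_mul_cancel hp₁, rpow_one,
    show -(2 / (p - 1)) * (p - 1) = -2 by field_simp, rpow_neg hv.le, rpow_two, ← div_eq_mul_inv]

theorem kappa_rpow (hp : 1 < p) (hd : d ∈ Ioo (-1 : ℝ) 1) (hy : y ∈ Ioo (-1 : ℝ) 1) :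
    kappa p d y ^ p = 2 * (p + 1) / (p - 1) ^ 2 * (1 - d ^ 2) / (1 + d * y) ^ 2 * kappa p d y := by
  rw [← kappa_rpow_sub_one hp hd hy, ← rpow_add_one (kappa_pos hp hd hy).ne', sub_add_cancel]

theorem weighted_laplacian_kappa (hp : 1 < p) (hd : d ∈ Ioo (-1 : ℝ) 1) (hy : y ∈ Ioo (-1 : ℝ) 1) :
    (rho p y)⁻¹ * deriv (fun z => rho p z * (1 - z ^ 2) * deriv (fun z' => kappa p d z') z) y
      = 2 * (p + 1) / (p - 1) ^ 2 * (1 - (1 - d ^ 2) / (1 + d * y) ^ 2) * kappa p d y := by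
  have hflux : (fun z => rho p z * (1 - z ^ 2) * deriv (fun z' => kappa p d z') z)
      = fun z => kappa0 p * (1 - d ^ 2) ^ (1 / (p - 1)) *
          ((1 - z ^ 2) ^ (2 / (p - 1)) * (1 - z ^ 2) *
            deriv (fun z' => (1 + d * z') ^ (-(2 / (p - 1)))) z) := by
    funext z
    simp only [kappa, rho, deriv_const_mul_field']
    ring
  rw [hflux, deriv_const_mul_field, rho, mul_left_comm,
    weighted_laplacian_one_add_mul_rpow (Ioo_subset_Icc_self hd) hy,
    two_mul_add_one_div_sq_eq hp.ne', kappa]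
  ring

theorem kappa_stationary_scalar (hp : 1 < p) (hd : d ∈ Ioo (-1 : ℝ) 1) (hy : y ∈ Ioo (-1 : ℝ) 1) :
    (rho p y)⁻¹ * deriv (fun z => rho p z * (1 - z ^ 2) * deriv (fun z' => kappa p d z') z) y
      - 2 * (p + 1) / (p - 1) ^ 2 * kappa p d y + kappa p d y ^ p = 0 := by
  rw [weighted_laplacian_kappa hp hd hy, kappa_rpow hp hd hy]
  ring

end Kappa

theorem kappa_is_stationary_general (p : ℝ) (hp : 1 < p) (m : ℕ)
    (d : ℝ) (hd : d ∈ Set.Ioo (-1 : ℝ) 1) :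
    (∀ y ∈ Set.Ioo (-1 : ℝ) 1,
      (rho p y)⁻¹ *
          deriv (fun z => rho p z * (1 - z ^ 2) * deriv (fun z' => kappa p d z') z) y
        - 2 * (p + 1) / (p - 1) ^ 2 * kappa p d y + kappa p d y ^ p = 0) ∧
    ∀ Ω : EuclideanSpace ℝ (Fin m), ‖Ω‖ = 1 →
      ∀ y ∈ Set.Ioo (-1 : ℝ) 1,
        (rho p y)⁻¹ •
            deriv (fun z => (rho p z * (1 - z ^ 2)) •
              deriv (fun z' => kappa p d z' • Ω) z) y
          - (2 * (p + 1) / (p - 1) ^ 2) • (kappa p d y • Ω)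
          + ‖kappa p d y • Ω‖ ^ (p - 1) • (kappa p d y • Ω) = 0 := by
  refine ⟨fun y hy => kappa_stationary_scalar hp hd hy, fun Ω hΩ y hy => ?_⟩
  have hκ := kappa_pos hp hd hy
  rw [deriv_mul_deriv_smul_const, norm_smul, hΩ, mul_one, norm_of_nonneg hκ.le, smul_smul,
    smul_smul, smul_smul, ← rpow_add_one hκ.ne', sub_add_cancel, ← sub_smul, ← add_smul,
    kappa_stationary_scalar hp hd hy, zero_smul]

/-- **The functions `κ(d,·)Ω` are stationary solutions** (verification of the
Lorentz-transformed solitons). -/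
theorem kappa_is_stationary (p : ℝ) (hp : 1 < p) (m : ℕ) (hm : 2 ≤ m)
    (d : ℝ) (hd : d ∈ Set.Ioo (-1 : ℝ) 1) :
    (∀ y ∈ Set.Ioo (-1 : ℝ) 1,
      (rho p y)⁻¹ *
          deriv (fun z => rho p z * (1 - z ^ 2) * deriv (fun z' => kappa p d z') z) y
        - 2 * (p + 1) / (p - 1) ^ 2 * kappa p d y + kappa p d y ^ p = 0) ∧
    ∀ Ω : EuclideanSpace ℝ (Fin m), ‖Ω‖ = 1 →
      ∀ y ∈ Set.Ioo (-1 : ℝ) 1,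
        (rho p y)⁻¹ •
            deriv (fun z => (rho p z * (1 - z ^ 2)) •
              deriv (fun z' => kappa p d z' • Ω) z) y
          - (2 * (p + 1) / (p - 1) ^ 2) • (kappa p d y • Ω)
          + ‖kappa p d y • Ω‖ ^ (p - 1) • (kappa p d y • Ω) = 0 :=
  kappa_is_stationary_general p hp m d hd
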